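/- For every Λ$-value V, every pure context K, and every Λ$-term M, if x ∉ FV(V) and x does not occur in K, then V $ K[M] =Λ$ (λx.(V $ K[x])) $ M. -/

import Mathlib

namespace Shift0

/-! ### The calculus Λ$ (de Bruijn representation) -/

/-- Terms of Λ$: variables, λ-abstractions, freeze `$(M)`, application, thaw `S₀(M)`. -/
inductive Tm : Type
  | var : Nat → Tm
  | lam : Tm → Tm
  | freeze : Tm → Tm
  | app : Tm → Tm → Tm
  | thaw : Tm → Tm
  deriving DecidableEq

namespace Tm

/-- Values of Λ$: variables, abstractions and frozen terms. -/
inductive IsValue : Tm → Prop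
  | var (n : Nat) : IsValue (.var n)
  | lam (M : Tm) : IsValue (.lam M)
  | freeze (M : Tm) : IsValue (.freeze M)

/-- Nonvalues of Λ$: applications and thawed terms. -/
inductive IsNonvalue : Tm → Prop
  | app (M N : Tm) : IsNonvalue (.app M N)
  | thaw (M : Tm) : IsNonvalue (.thaw M)

/-- Boolean value test. -/
def isVal : Tm → Bool
  | .var _ => true
  | .lam _ => true
  | .freeze _ => true
  | .app _ _ => false
  | .thaw _ => false

/-- Lift (shift) the free de Bruijn variables `≥ d` up by one. -/
def lift (d : Nat) : Tm → Tm
  | .var n => if n < d then .var n else .var (n+1)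
  | .lam M => .lam (lift (d+1) M)
  | .freeze M => .freeze (lift d M)
  | .app M N => .app (lift d M) (lift d N)
  | .thaw M => .thaw (lift d M)

/-- Capture-avoiding substitution `M[N/x]` (for the de Bruijn variable `x`);
the variables above `x` are shifted down by one. -/
def subst : Tm → Nat → Tm → Tm
  | .var n, x, N => if n = x then N else if n < x then .var n else .var (n-1)
  | .lam M, x, N => .lam (subst M (x+1) (N.lift 0))
  | .freeze M, x, N => .freeze (subst M x N)
  | .app M L, x, N => .app (subst M x N) (subst L x N)
  | .thaw M, x, N => .thaw (subst M x N)

/-- `M $ N` is sugar for `$(N) M`. -/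
def dol (M N : Tm) : Tm := .app (.freeze N) M

/-- `let x = M in N` is sugar for `S₀k.((λx.(k $ N)) $ M)`;
here `N` has the let-bound variable as de Bruijn index `0`. -/
def letIn (M N : Tm) : Tm :=
  .thaw (.lam (dol (.lam (dol (.var 1) (N.lift 1))) (M.lift 0)))

end Tm

/-- Bindable contexts `J ::= [] M | V [] | S₀([])`. -/
inductive JCtx : Type
  | appL : Tm → JCtx
  | appR : Tm → JCtx
  | thaw : JCtx

namespace JCtx

/-- Well-formedness: in `V []` the term `V` must be a value. -/
def Wf : JCtx → Prop
  | .appL _ => True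
  | .appR V => V.IsValue
  | .thaw => True

/-- Plugging a term into a bindable context. -/
def plug : JCtx → Tm → Tm
  | .appL N, M => .app M N
  | .appR V, M => .app V M
  | .thaw, M => .thaw M

/-- Lift the free variables `≥ d` of a bindable context. -/
def lift (d : Nat) : JCtx → JCtx
  | .appL N => .appL (N.lift d)
  | .appR V => .appR (V.lift d)
  | .thaw => .thaw

end JCtx

/-- Pure contexts `K ::= [] | J[K]`, represented as a list of bindable
contexts (head outermost). -/
abbrev KCtx : Type := List JCtx

/-- Plugging a term into a pure context. -/
def KCtx.plug : KCtx → Tm → Tm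
  | [], M => M
  | (J :: K), M => J.plug (KCtx.plug K M)

/-- Well-formedness of a pure context. -/
def KCtx.Wf (K : KCtx) : Prop := ∀ J ∈ K, JCtx.Wf J

/-- Lift the free variables `≥ d` of a pure context. -/
def KCtx.lift (d : Nat) (K : KCtx) : KCtx := K.map (JCtx.lift d)

namespace Tm

/-- The basic contractions of Λ$. -/
inductive Contr : Tm → Tm → Prop
  | betav (M V : Tm) : V.IsValue → Contr (.app (.lam M) V) (M.subst 0 V)
  | etav (V : Tm) : V.IsValue → Contr (.lam (.app (V.lift 0) (.var 0))) V
  | dolv (V : Tm) : V.IsValue → Contr (.freeze V) (.lam (.app (.var 0) (V.lift 0)))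
  | dolsh (V : Tm) : V.IsValue → Contr (.freeze (.thaw V)) V
  | shdol (M : Tm) : Contr (.thaw (.freeze M)) M
  | pure (V : Tm) : V.IsValue → Contr (.thaw (.lam (.app (.var 0) (V.lift 0)))) V
  | bind (J : JCtx) (P : Tm) : J.Wf → P.IsNonvalue →
      Contr (J.plug P) (letIn P ((J.lift 0).plug (.var 0)))

/-- One-step reduction of Λ$: closure of the contractions under arbitrary
contexts (including under binders). -/
inductive Step : Tm → Tm → Prop
  | contr {M N : Tm} : Contr M N → Step M N
  | lam {M N : Tm} : Step M N → Step (.lam M) (.lam N)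
  | freeze {M N : Tm} : Step M N → Step (.freeze M) (.freeze N)
  | appL {M N L : Tm} : Step M N → Step (.app M L) (.app N L)
  | appR {M N L : Tm} : Step M N → Step (.app L M) (.app L N)
  | thaw {M N : Tm} : Step M N → Step (.thaw M) (.thaw N)

/-- Multi-step reduction `↠Λ$`. -/
def Steps : Tm → Tm → Prop := Relation.ReflTransGen Step

/-- Convertibility `=Λ$`: the equivalence generated by reduction. -/
def Equiv : Tm → Tm → Prop := Relation.EqvGen Step

end Tm

/-! ### The pure λ-calculus with βη -/

/-- Terms of the pure λ-calculus. -/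
inductive Lam : Type
  | var : Nat → Lam
  | lam : Lam → Lam
  | app : Lam → Lam → Lam
  deriving DecidableEq

namespace Lam

/-- Lift the free de Bruijn variables `≥ d` up by one. -/
def lift (d : Nat) : Lam → Lam
  | .var n => if n < d then .var n else .var (n+1)
  | .lam M => .lam (lift (d+1) M)
  | .app M N => .app (lift d M) (lift d N)

/-- Capture-avoiding substitution `M[N/x]`. -/
def subst : Lam → Nat → Lam → Lam
  | .var n, x, N => if n = x then N else if n < x then .var n else .var (n-1)
  | .lam M, x, N => .lam (subst M (x+1) (N.lift 0))
  | .app M L, x, N => .app (subst M x N) (subst L x N)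

/-- β and η contractions. -/
inductive Contr : Lam → Lam → Prop
  | beta (M N : Lam) : Contr (.app (.lam M) N) (M.subst 0 N)
  | eta (M : Lam) : Contr (.lam (.app (M.lift 0) (.var 0))) M

/-- One-step βη-reduction, closed under arbitrary contexts. -/
inductive Step : Lam → Lam → Prop
  | contr {M N : Lam} : Contr M N → Step M N
  | lam {M N : Lam} : Step M N → Step (.lam M) (.lam N)
  | appL {M N L : Lam} : Step M N → Step (.app M L) (.app N L)
  | appR {M N L : Lam} : Step M N → Step (.app L M) (.app L N)

/-- Multi-step βη-reduction `↠λ`. -/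
def Steps : Lam → Lam → Prop := Relation.ReflTransGen Step

/-- βη-convertibility `=λ`. -/
def Equiv : Lam → Lam → Prop := Relation.EqvGen Step

end Lam

end Shift0

namespace Shift0

/-! ### The CPS translation `* : Λ$ → λ` and its value part `†` -/

mutual

/-- The CPS translation `M*`.  It is the full unfolding of the equations
`V* = λk.k V†`, `J[P]* = λk.P* (λx.(J[x]* k))`, `(V W)* = V† W†` and
`(S₀(V))* = V†`. -/
def cps : Tm → Lam
  | .var n => .lam (.app (.var 0) (.var (n+1)))
  | .lam M => .lam (.app (.var 0) ((Lam.lam (cps M)).lift 0))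
  | .freeze M => .lam (.app (.var 0) ((cps M).lift 0))
  | .app M N =>
      if M.isVal then
        if N.isVal then .app (cpsV M) (cpsV N)
        else
          .lam (.app ((cps N).lift 0)
            (.lam (.app (.app (((cpsV M).lift 0).lift 0) (.var 0)) (.var 1))))
      else
        if N.isVal then
          .lam (.app ((cps M).lift 0)
            (.lam (.app (.app (.var 0) (((cpsV N).lift 0).lift 0)) (.var 1))))
        else
          .lam (.app ((cps M).lift 0)
            (.lam (.app
              (.lam (.app ((((cps N).lift 0).lift 0).lift 0)
                (.lam (.app (.app (.var 2) (.var 0)) (.var 1)))))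
              (.var 1))))
  | .thaw M =>
      if M.isVal then cpsV M
      else .lam (.app ((cps M).lift 0) (.lam (.app (.var 0) (.var 1))))

/-- The value part `V†` of the CPS translation (junk on nonvalues). -/
def cpsV : Tm → Lam
  | .var n => .var n
  | .lam M => .lam (cps M)
  | .freeze M => cps M
  | .app _ _ => .var 0
  | .thaw _ => .var 0

end

/-! ### The direct-style translation `# : λ → Λ$` and its auxiliary `♮` -/

namespace Lam

/-- Does the de Bruijn variable `x` occur free in the term? -/
def hasVar (x : Nat) : Lam → Bool
  | .var n => n = x
  | .lam M => hasVar (x+1) M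
  | .app M N => hasVar x M || hasVar x N

/-- Shift the free de Bruijn variables `> d` down by one
(inverse of `lift d` on terms not containing `d` free). -/
def lower (d : Nat) : Lam → Lam
  | .var n => if d < n then .var (n-1) else .var n
  | .lam M => .lam (lower (d+1) M)
  | .app M N => .app (lower d M) (lower d N)

/-- Size of a λ-term. -/
def size : Lam → Nat
  | .var _ => 1
  | .lam M => size M + 1
  | .app M N => size M + size N + 1

theorem size_lower (d : Nat) (M : Lam) : (lower d M).size = M.size := by
  induction M generalizing d with
  | var n => simp only [lower]; split <;> rfl
  | lam M ih => simp [lower, size, ih]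
  | app M N ihM ihN => simp [lower, size, ihM, ihN]

end Lam

mutual

/-- The direct-style translation `M#`; the case `(λx.x N)# = N♮` (with
`x ∉ FV(N)`) is rendered by checking that de Bruijn variable `0` does not
occur in `N` and lowering the remaining variables. -/
def ds : Lam → Tm
  | .var n => .thaw (.var n)
  | .app M N => .app (nat M) (nat N)
  | .lam (.app (.var 0) N) =>
      if N.hasVar 0 then .thaw (.lam (.app (.var 0) (nat N)))
      else nat (N.lower 0)
  | .lam M => .thaw (.lam (ds M))
termination_by M => M.size
decreasing_by all_goals simp [Lam.size, Lam.size_lower] <;> omega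

/-- The auxiliary direct-style translation `M♮`. -/
def nat : Lam → Tm
  | .var n => .var n
  | .lam M => .lam (ds M)
  | .app M N => .freeze (.app (nat M) (nat N))
termination_by M => M.size
decreasing_by all_goals simp [Lam.size, Lam.size_lower] <;> omega

end

end Shift0

namespace Shift0

/-! ### Materzok's calculus λ$ -/

/-- Terms of λ$: variables, abstractions, applications, `S₀x.e`
(the body is under a binder) and `e $ e'`. -/
inductive LTm : Type
  | var : Nat → LTm
  | lam : LTm → LTm
  | app : LTm → LTm → LTm
  | shift : LTm → LTm
  | dollar : LTm → LTm → LTm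
  deriving DecidableEq

namespace LTm

/-- Values of λ$: variables and abstractions. -/
inductive IsValue : LTm → Prop
  | var (n : Nat) : IsValue (.var n)
  | lam (e : LTm) : IsValue (.lam e)

/-- Lift the free de Bruijn variables `≥ d` up by one. -/
def lift (d : Nat) : LTm → LTm
  | .var n => if n < d then .var n else .var (n+1)
  | .lam e => .lam (lift (d+1) e)
  | .app e f => .app (lift d e) (lift d f)
  | .shift e => .shift (lift (d+1) e)
  | .dollar e f => .dollar (lift d e) (lift d f)

/-- Capture-avoiding substitution `e[v/x]`. -/
def subst : LTm → Nat → LTm → LTm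
  | .var n, x, N => if n = x then N else if n < x then .var n else .var (n-1)
  | .lam e, x, N => .lam (subst e (x+1) (N.lift 0))
  | .app e f, x, N => .app (subst e x N) (subst f x N)
  | .shift e, x, N => .shift (subst e (x+1) (N.lift 0))
  | .dollar e f, x, N => .dollar (subst e x N) (subst f x N)

end LTm

/-- Pure contexts of λ$: `E ::= [] | E e | v E | E $ e`. -/
inductive ECtx : Type
  | hole : ECtx
  | appL : ECtx → LTm → ECtx
  | appR : LTm → ECtx → ECtx
  | dolL : ECtx → LTm → ECtx

namespace ECtx

/-- Well-formedness: in `v E` the term `v` must be a value. -/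
def Wf : ECtx → Prop
  | .hole => True
  | .appL E _ => E.Wf
  | .appR v E => v.IsValue ∧ E.Wf
  | .dolL E _ => E.Wf

/-- Plugging a term into a pure context of λ$. -/
def plug : ECtx → LTm → LTm
  | .hole, e => e
  | .appL E f, e => .app (E.plug e) f
  | .appR v E, e => .app v (E.plug e)
  | .dolL E f, e => .dollar (E.plug e) f

/-- Lift the free variables `≥ d` of a pure context. -/
def lift (d : Nat) : ECtx → ECtx
  | .hole => .hole
  | .appL E f => .appL (E.lift d) (f.lift d)
  | .appR v E => .appR (v.lift d) (E.lift d)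
  | .dolL E f => .dolL (E.lift d) (f.lift d)

end ECtx

namespace LTm

/-- The axioms of λ$. -/
inductive Ax : LTm → LTm → Prop
  | betav (e v : LTm) : v.IsValue → Ax (.app (.lam e) v) (e.subst 0 v)
  | etav (v : LTm) : v.IsValue → Ax (.lam (.app (v.lift 0) (.var 0))) v
  | dolv (v w : LTm) : v.IsValue → w.IsValue → Ax (.dollar v w) (.app v w)
  | dolE (v : LTm) (E : ECtx) (e : LTm) : v.IsValue → E.Wf →
      Ax (.dollar v (E.plug e))
         (.dollar (.lam (.dollar (v.lift 0) ((E.lift 0).plug (.var 0)))) e)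
  | betad (v e : LTm) : v.IsValue → Ax (.dollar v (.shift e)) (e.subst 0 v)
  | etad (e : LTm) : Ax (.shift (.dollar (.var 0) (e.lift 0))) e

/-- The axioms applied in an arbitrary context. -/
inductive AStep : LTm → LTm → Prop
  | ax {e f : LTm} : Ax e f → AStep e f
  | lam {e f : LTm} : AStep e f → AStep (.lam e) (.lam f)
  | appL {e f g : LTm} : AStep e f → AStep (.app e g) (.app f g)
  | appR {e f g : LTm} : AStep e f → AStep (.app g e) (.app g f)
  | shift {e f : LTm} : AStep e f → AStep (.shift e) (.shift f)
  | dolL {e f g : LTm} : AStep e f → AStep (.dollar e g) (.dollar f g)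
  | dolR {e f g : LTm} : AStep e f → AStep (.dollar g e) (.dollar g f)

/-- The equational theory `=λ$` generated by the axioms. -/
def Equiv : LTm → LTm → Prop := Relation.EqvGen AStep

end LTm

/-- The embedding `ι : λ$ → Λ$`. -/
def iota : LTm → Tm
  | .var n => .var n
  | .lam e => .lam (iota e)
  | .app e f => .app (iota e) (iota f)
  | .shift e => .thaw (.lam (iota e))
  | .dollar e f => .app (.freeze (iota f)) (iota e)

/-- The translation `π : Λ$ → λ$`. -/
def pi : Tm → LTm
  | .var n => .var n
  | .lam M => .lam (pi M)
  | .freeze M => .lam (.dollar (.var 0) ((pi M).lift 0))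
  | .app M N => .app (pi M) (pi N)
  | .thaw M => .app (.lam (.shift (.app (.var 1) (.var 0)))) (pi M)

/-- Materzok's CPS translation `⟦·⟧ : λ$ → λ` (with the value translation
`⟪x⟫ = x`, `⟪λx.e⟫ = λx.⟦e⟧` inlined). -/
def mcps : LTm → Lam
  | .var n => .lam (.app (.var 0) (.var (n+1)))
  | .lam e => .lam (.app (.var 0) ((Lam.lam (mcps e)).lift 0))
  | .app e f => .lam (.app ((mcps e).lift 0)
      (.lam (.app (((mcps f).lift 0).lift 0)
        (.lam (.app (.app (.var 1) (.var 0)) (.var 2))))))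
  | .shift e => .lam (mcps e)
  | .dollar e f => .lam (.app ((mcps e).lift 0)
      (.lam (.app (.app (((mcps f).lift 0).lift 0) (.var 0)) (.var 1))))

end Shift0

/-!
Induction on `K`, one bindable frame `J` at a time. For a single frame: if `N` is a value,
`(λx.(V $ J[x])) $ N` reduces to `V $ J[N]` by `$v` and two `βv` steps; if `N` is a nonvalue,
`V $ J[N]` reduces to `(λx.(V $ J[x])) $ N` by `bind`, `$S₀` and `βv`. For `K = J[K']`, the frame
lemma and the induction hypothesis give `(λy.((λx.(V $ J[x])) $ K'[y])) $ M`, and the frame lemma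
used backwards under `λy` turns the body into `V $ J[K'[y]]`.
-/

namespace Shift0

local infix:50 " =Λ$ " => Tm.Equiv
local infix:50 " ↠Λ$ " => Tm.Steps

namespace Tm

theorem IsValue.lift {V : Tm} (h : V.IsValue) (d : Nat) : (V.lift d).IsValue := by
  cases h with
  | var n => simp only [Tm.lift]; split <;> exact .var _
  | lam M => exact .lam _
  | freeze M => exact .freeze _

theorem isValue_or_isNonvalue : ∀ M : Tm, M.IsValue ∨ M.IsNonvalue
  | .var n => .inl (.var n)
  | .lam M => .inl (.lam M)
  | .freeze M => .inl (.freeze M)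
  | .app M N => .inr (.app M N)
  | .thaw M => .inr (.thaw M)

@[simp]
theorem subst_lift (M : Tm) (d : Nat) (N : Tm) : (M.lift d).subst d N = M := by
  induction M generalizing d N with
  | var n =>
    simp only [lift]
    split_ifs <;> simp only [subst] <;> split_ifs <;> first | rfl | omega
  | lam M ih => simp [lift, subst, ih]
  | freeze M ih => simp [lift, subst, ih]
  | app M N ihM ihN => simp [lift, subst, ihM, ihN]
  | thaw M ih => simp [lift, subst, ih]

theorem lift_lift (M : Tm) {e d : Nat} (h : e ≤ d) :
    (M.lift d).lift e = (M.lift e).lift (d + 1) := by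
  induction M generalizing e d with
  | var n =>
    simp only [lift]
    split_ifs <;> simp only [lift] <;> split_ifs <;> first | rfl | omega
  | lam M ih => simp [lift, ih (Nat.succ_le_succ h)]
  | freeze M ih => simp [lift, ih h]
  | app M N ihM ihN => simp [lift, ihM h, ihN h]
  | thaw M ih => simp [lift, ih h]

theorem lift_one_lift_zero (M : Tm) : (M.lift 0).lift 1 = (M.lift 0).lift 0 :=
  (M.lift_lift le_rfl).symm

theorem Equiv.symm {M N : Tm} (h : M =Λ$ N) : N =Λ$ M :=
  Relation.EqvGen.symm _ _ h

theorem Equiv.trans {M N L : Tm} (h₁ : M =Λ$ N) (h₂ : N =Λ$ L) : M =Λ$ L :=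
  Relation.EqvGen.trans _ _ _ h₁ h₂

instance : Trans Equiv Equiv Equiv := ⟨Equiv.trans⟩

theorem Steps.equiv {M N : Tm} (h : M ↠Λ$ N) : M =Λ$ N :=
  Relation.EqvGen.reflTransGen_le_eqvGen Step M N h

theorem Steps.lam {M N : Tm} (h : M ↠Λ$ N) : .lam M ↠Λ$ .lam N :=
  Relation.ReflTransGen.lift Tm.lam (fun _ _ => Step.lam) _ _ h

theorem Equiv.map {f : Tm → Tm} (hf : ∀ M N, Step M N → Step (f M) (f N)) {M N : Tm}
    (h : M =Λ$ N) : f M =Λ$ f N := by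
  induction h with
  | rel _ _ s => exact .rel _ _ (hf _ _ s)
  | refl _ => exact .refl _
  | symm _ _ _ ih => exact ih.symm
  | trans _ _ _ _ _ ih₁ ih₂ => exact ih₁.trans ih₂

theorem Equiv.lam {M N : Tm} (h : M =Λ$ N) : .lam M =Λ$ .lam N :=
  h.map fun _ _ => Step.lam

theorem Equiv.dol_left {M N : Tm} (h : M =Λ$ N) (L : Tm) : dol M L =Λ$ dol N L :=
  h.map fun _ _ => Step.appR

theorem dol_steps_app {L N : Tm} (hL : L.IsValue) (hN : N.IsValue) : dol L N ↠Λ$ .app L N := by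
  have h := Step.contr (Contr.betav (.app (.var 0) (N.lift 0)) L hL)
  simp only [subst, if_pos, subst_lift] at h
  exact .head (.appL (.contr (.dolv N hN))) (.single h)

end Tm

namespace JCtx

theorem Wf.lift {J : JCtx} (h : J.Wf) (d : Nat) : (J.lift d).Wf := by
  cases J with
  | appL N => trivial
  | appR V => exact Tm.IsValue.lift h d
  | thaw => trivial

theorem lift_plug (J : JCtx) (d : Nat) (M : Tm) :
    (J.plug M).lift d = (J.lift d).plug (M.lift d) := by
  cases J <;> rfl

@[simp]
theorem subst_lift_plug (J : JCtx) (M N : Tm) :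
    ((J.lift 0).plug M).subst 0 N = J.plug (M.subst 0 N) := by
  cases J <;> simp [JCtx.lift, JCtx.plug, Tm.subst]

theorem lift_one_lift_zero (J : JCtx) : (J.lift 0).lift 1 = (J.lift 0).lift 0 := by
  cases J <;> simp [JCtx.lift, Tm.lift_one_lift_zero]

end JCtx

namespace KCtx

theorem Wf.head {J : JCtx} {K : KCtx} (h : KCtx.Wf (J :: K)) : J.Wf :=
  h J List.mem_cons_self

theorem Wf.tail {J : JCtx} {K : KCtx} (h : KCtx.Wf (J :: K)) : K.Wf :=
  fun J' hJ' => h J' (List.mem_cons_of_mem _ hJ')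

theorem lift_plug (K : KCtx) (d : Nat) (M : Tm) :
    (K.plug M).lift d = (K.lift d).plug (M.lift d) := by
  induction K with
  | nil => rfl
  | cons J K ih => simp [KCtx.plug, KCtx.lift, JCtx.lift_plug, ih]

theorem lift_one_lift_zero (K : KCtx) : (K.lift 0).lift 1 = (K.lift 0).lift 0 := by
  simp [KCtx.lift, JCtx.lift_one_lift_zero]

end KCtx

/-- `λx.(V $ K[x])`, with `x` fresh for `V` and `K`. -/
def dolAbs (V : Tm) (K : KCtx) : Tm :=
  .lam (Tm.dol (V.lift 0) ((K.lift 0).plug (.var 0)))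

theorem lift_dolAbs (V : Tm) (K : KCtx) :
    (dolAbs V K).lift 0 = dolAbs (V.lift 0) (K.lift 0) := by
  simp [dolAbs, Tm.dol, Tm.lift, Tm.lift_one_lift_zero, KCtx.lift_plug,
    KCtx.lift_one_lift_zero]

theorem dolAbs_nil_steps {V : Tm} (hV : V.IsValue) : dolAbs V [] ↠Λ$ V :=
  (Tm.dol_steps_app (hV.lift 0) (.var 0)).lam.tail (.contr (.etav V hV))

theorem JCtx.dol_plug_equiv {V : Tm} {J : JCtx} (hV : V.IsValue) (hJ : J.Wf) (N : Tm) :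
    Tm.dol V (J.plug N) =Λ$ Tm.dol (dolAbs V [J]) N := by
  rcases N.isValue_or_isNonvalue with hN | hN
  · have hβ := Tm.Step.contr
      (Tm.Contr.betav (Tm.dol (V.lift 0) ((J.lift 0).plug (.var 0))) N hN)
    simp only [Tm.dol, Tm.subst, JCtx.subst_lift_plug, Tm.subst_lift, if_pos] at hβ
    exact (Tm.Steps.equiv ((Tm.dol_steps_app (.lam _) hN).tail hβ)).symm
  · have hβ := Tm.Step.contr (Tm.Contr.betav
      (Tm.dol (.lam (Tm.dol (.var 1) (((J.lift 0).plug (.var 0)).lift 1))) (N.lift 0)) V hV)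
    simp only [Tm.dol, Tm.subst, Tm.subst_lift, if_pos] at hβ
    exact Tm.Steps.equiv <| .head (.appL (.freeze (.contr (.bind J N hJ hN))))
      (.head (.appL (.contr (.dolsh _ (.lam _)))) (.single hβ))

theorem dolAbs_dolAbs_equiv {V : Tm} {J : JCtx} (hV : V.IsValue) (hJ : J.Wf) (K : KCtx) :
    dolAbs (dolAbs V [J]) K =Λ$ dolAbs V (J :: K) := by
  rw [dolAbs, lift_dolAbs]
  exact (JCtx.dol_plug_equiv (hV.lift 0) (hJ.lift 0) _).symm.lam

/-- For every Λ$-value `V`, pure context `K` and term `M`,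
`V $ K[M] =Λ$ (λx.(V $ K[x])) $ M`, where the freshness of `x` for `V` and `K`
is rendered by lifting their free variables. -/
theorem dol_pure_context (V : Tm) (K : KCtx) (M : Tm) (hV : V.IsValue) (hK : K.Wf) :
    Tm.Equiv (Tm.dol V (K.plug M))
      (Tm.dol (.lam (Tm.dol (V.lift 0) ((K.lift 0).plug (.var 0)))) M) := by
  induction K generalizing V with
  | nil => exact ((dolAbs_nil_steps hV).equiv.dol_left M).symm
  | cons J K ih =>
    calc Tm.dol V (J.plug (KCtx.plug K M)) =Λ$ Tm.dol (dolAbs V [J]) (KCtx.plug K M) :=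
          JCtx.dol_plug_equiv hV hK.head _
      _ =Λ$ Tm.dol (dolAbs (dolAbs V [J]) K) M := ih _ (.lam _) hK.tail
      _ =Λ$ Tm.dol (dolAbs V (J :: K)) M := (dolAbs_dolAbs_equiv hV hK.head K).dol_left M

end Shift0
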